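/- Let (μ_n) be positive reals tending to 0 with counting functions M_k(ε) := #{n : μ_n > kε}. Then for all ε > 0, the metric entropy of E_∞ = {x : |x_n| ≤ μ_n ∀n} with respect to the sup-norm satisfies H(ε; E_∞, ‖·‖_∞) = ∑_{k=1}^∞ log(1 + 1/k)·M_k(ε). -/

import Mathlib

open Filter Metric ENNReal

/-- The `ε`-covering number (with centers allowed anywhere in the ambient space),
as an extended natural number. -/
noncomputable def coveringNumber {X : Type*} [PseudoMetricSpace X] (ε : ℝ) (K : Set X) : ℕ∞ :=
  sInf {n : ℕ∞ | ∃ S : Finset X, (S.card : ℕ∞) = n ∧ K ⊆ ⋃ x ∈ S, Metric.closedBall x ε}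

/-- Metric entropy: binary logarithm of the covering number. -/
noncomputable def metricEntropy {X : Type*} [PseudoMetricSpace X] (ε : ℝ) (K : Set X) : ℝ :=
  Real.logb 2 ((coveringNumber ε K).toNat : ℝ)

/-!
Only the finitely many coordinates with `μ n > ε` matter, and on them `E_∞` is a product of
intervals under the sup-norm. Hence its covering number is `∏ ⌈μ n / ε⌉`: that many
`ε`-balls cover `[-μ n, μ n]`, while that many equally spaced points of `[-μ n, μ n]` are more
than `2ε` apart. Finally `log ⌈μ n / ε⌉` telescopes into `∑_{k < ⌈μ n / ε⌉ - 1} log (1 + 1/(k+1))`,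
and exchanging the sums over `n` and `k` counts, for each `k`, the `n` with `(k + 1) ε < μ n`.
-/

open Finset
open scoped NNReal

section Covering

variable {X : Type*} [PseudoMetricSpace X]

theorem coveringNumber_eq_externalCoveringNumber {ε : ℝ} (hε : 0 ≤ ε) (K : Set X) :
    coveringNumber ε K = externalCoveringNumber ε.toNNReal K := by
  have hcover {C : Set X} : IsCover ε.toNNReal K C ↔ K ⊆ ⋃ x ∈ C, closedBall x ε := by
    rw [isCover_iff_subset_iUnion_closedBall, Real.coe_toNNReal _ hε]
  apply le_antisymm
  · refine le_iInf₂ fun C hC => ?_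
    obtain hfin | hinf := C.finite_or_infinite
    · refine sInf_le ⟨hfin.toFinset, ?_, by simpa using hcover.mp hC⟩
      rw [hfin.encard_eq_coe_toFinset_card]
    · simp [hinf.encard_eq]
  · refine le_sInf ?_
    rintro _ ⟨S, rfl, hS⟩
    simpa using (hcover.mpr hS).externalCoveringNumber_le_encard

theorem coveringNumber_le_card {ι : Type*} [Fintype ι] {ε : ℝ} {K : Set X} (c : ι → X)
    (hc : K ⊆ ⋃ i, closedBall (c i) ε) : coveringNumber ε K ≤ Fintype.card ι := by
  classical
  calc coveringNumber ε K ≤ ((univ.image c).card : ℕ∞) :=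
      sInf_le (s := {n | ∃ S : Finset X, _}) ⟨_, rfl, by simpa using hc⟩
    _ ≤ Fintype.card ι := mod_cast card_image_le

theorem card_le_coveringNumber {ι : Type*} [Fintype ι] {ε : ℝ} (hε : 0 ≤ ε) {K : Set X}
    (p : ι → X) (hpK : ∀ i, p i ∈ K) (hp : Pairwise fun i j => 2 * ε < dist (p i) (p j)) :
    (Fintype.card ι : ℕ∞) ≤ coveringNumber ε K := by
  have hinj : p.Injective := fun i j hij => by
    by_contra hne
    have := hp hne
    simp only [hij, dist_self] at this
    linarith
  have hsep : IsSeparated (2 * ε.toNNReal : ℝ≥0) (Set.range p) := by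
    rintro _ ⟨i, rfl⟩ _ ⟨j, rfl⟩ hne
    rw [edist_dist, ← ENNReal.ofReal_coe_nnreal]
    refine (ENNReal.ofReal_lt_ofReal_iff_of_nonneg (by positivity)).mpr ?_
    simpa [Real.coe_toNNReal _ hε] using hp (fun h => hne (congrArg p h))
  calc (Fintype.card ι : ℕ∞) = ENat.card ι := ENat.card_eq_coe_fintype_card.symm
    _ ≤ (Set.range p).encard := hinj.encard_range
    _ ≤ packingNumber (2 * ε.toNNReal) K :=
      hsep.encard_le_packingNumber (Set.range_subset_iff.mpr hpK)
    _ ≤ externalCoveringNumber ε.toNNReal K := packingNumber_two_mul_le_externalCoveringNumber _ _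
    _ = coveringNumber ε K := (coveringNumber_eq_externalCoveringNumber hε K).symm

end Covering

theorem exists_nat_lt_le_le_add_one {y : ℝ} {m : ℕ} (hm : 1 ≤ m) (hy0 : 0 ≤ y) (hym : y ≤ m) :
    ∃ i < m, (i : ℝ) ≤ y ∧ y ≤ i + 1 := by
  rcases le_or_gt ⌊y⌋₊ (m - 1) with h | h
  · exact ⟨⌊y⌋₊, by omega, Nat.floor_le hy0, (Nat.lt_floor_add_one y).le⟩
  · refine ⟨m - 1, by omega, ?_, ?_⟩
    · exact (Nat.cast_le.mpr h.le).trans (Nat.floor_le hy0)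
    · rwa [Nat.cast_pred hm, sub_add_cancel]

theorem exists_abs_sub_le_of_abs_le {a ε x : ℝ} (ha : 0 < a) (hε : 0 < ε) (hx : |x| ≤ a) :
    ∃ i < ⌈a / ε⌉₊, |x - (-a + (2 * i + 1) * ε)| ≤ ε := by
  obtain ⟨hxl, hxr⟩ := abs_le.mp hx
  have hy : (x + a) / (2 * ε) ≤ a / ε := by
    rw [div_le_div_iff₀ (by positivity) hε]
    nlinarith
  obtain ⟨i, hi, hlo, hhi⟩ := exists_nat_lt_le_le_add_one (Nat.one_le_ceil_iff.mpr (div_pos ha hε))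
    (div_nonneg (by linarith) (by positivity)) (hy.trans (Nat.le_ceil _))
  rw [le_div_iff₀ (by positivity)] at hlo
  rw [div_le_iff₀ (by positivity)] at hhi
  exact ⟨i, hi, abs_le.mpr ⟨by linarith, by linarith⟩⟩

/-- For `m = 1` the division by zero leaves the single point `-a`. -/
noncomputable def equispaced (a : ℝ) (m i : ℕ) : ℝ := -a + i * (2 * a / (m - 1))

theorem abs_equispaced_le {a : ℝ} (ha : 0 ≤ a) {m i : ℕ} (hi : i < m) :
    |equispaced a m i| ≤ a := by
  rw [equispaced, abs_le]
  rcases Nat.eq_zero_or_pos i with rfl | hi0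
  · simp only [CharP.cast_eq_zero, zero_mul, add_zero, le_refl, neg_le_self_iff, true_and]
    exact ha
  have hm : (0 : ℝ) < m - 1 := by
    rw [sub_pos]; exact_mod_cast (show 1 < m by omega)
  have him : (i : ℝ) ≤ m - 1 := le_sub_iff_add_le.mpr (by exact_mod_cast hi)
  have hstep : 0 ≤ 2 * a / (m - 1) := by positivity
  have : i * (2 * a / (m - 1)) ≤ 2 * a :=
    calc i * (2 * a / (m - 1)) ≤ (m - 1) * (2 * a / (m - 1)) := by gcongr
      _ = 2 * a := mul_div_cancel₀ _ hm.ne'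
  constructor <;> nlinarith

theorem lt_abs_equispaced_sub {a ε : ℝ} (hε : 0 < ε) {i j : ℕ} (hi : i < ⌈a / ε⌉₊)
    (hj : j < ⌈a / ε⌉₊) (hij : i ≠ j) :
    2 * ε < |equispaced a ⌈a / ε⌉₊ i - equispaced a ⌈a / ε⌉₊ j| := by
  set m := ⌈a / ε⌉₊
  have hm : (0 : ℝ) < m - 1 := by
    rw [sub_pos]; exact_mod_cast (show 1 < m by omega)
  have hmε : (m - 1) * ε < a := by
    have := Nat.ceil_lt_add_one (Nat.ceil_pos.mp (show 0 < m by omega)).le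
    rw [← lt_div_iff₀ hε]; linarith
  have hgap : 2 * ε < 2 * a / (m - 1) := by
    rw [lt_div_iff₀ hm]; linarith
  have hij' : (1 : ℝ) ≤ |(i : ℝ) - j| := by
    rcases Nat.lt_or_gt_of_ne hij with h | h
    · have : (i : ℝ) + 1 ≤ j := by exact_mod_cast h
      exact le_abs.mpr (Or.inr (by linarith))
    · have : (j : ℝ) + 1 ≤ i := by exact_mod_cast h
      exact le_abs.mpr (Or.inl (by linarith))
  calc 2 * ε < 2 * a / (m - 1) := hgap
    _ ≤ |(i : ℝ) - j| * (2 * a / (m - 1)) := le_mul_of_one_le_left (by linarith) hij'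
    _ = |equispaced a m i - equispaced a m j| := by
      rw [equispaced, equispaced, show ∀ x y z : ℝ, -a + x * z - (-a + y * z) = (x - y) * z by
        intros; ring, abs_mul, abs_of_pos (hε.trans (by linarith : ε < 2 * a / (m - 1)))]

theorem Fintype.card_pi_fin_eq_prod_range (N : ℕ) (m : ℕ → ℕ) :
    Fintype.card ((n : Fin N) → Fin (m n)) = ∏ n ∈ range N, m n := by
  simp [Fintype.card_pi, Fin.prod_univ_eq_prod_range]

section Linfty

local notation "ℓ∞" => lp (fun _ : ℕ => ℝ) ⊤

def linftyBox (a : ℕ → ℝ) : Set ℓ∞ := {x | ∀ n, |x n| ≤ a n}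

noncomputable def zeroExtend {N : ℕ} (v : Fin N → ℝ) : ℓ∞ :=
  ⟨fun n => if h : n < N then v ⟨n, h⟩ else 0,
    (memℓp_zero_iff.mpr ((Set.finite_lt_nat N).subset fun _ hn =>
      by_contra fun h => hn (dif_neg h))).of_exponent_ge le_top⟩

theorem zeroExtend_apply {N : ℕ} (v : Fin N → ℝ) (n : ℕ) :
    zeroExtend v n = if h : n < N then v ⟨n, h⟩ else 0 := rfl

theorem coveringNumber_linftyBox_le {a : ℕ → ℝ} {ε : ℝ} (hε : 0 < ε) {N : ℕ}
    (hpos : ∀ n < N, 0 < a n) (htail : ∀ n, N ≤ n → a n ≤ ε) :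
    coveringNumber ε (linftyBox a) ≤ ((∏ n ∈ range N, ⌈a n / ε⌉₊ : ℕ) : ℕ∞) := by
  rw [← Fintype.card_pi_fin_eq_prod_range]
  refine coveringNumber_le_card (fun σ => zeroExtend fun n => -a n + (2 * σ n + 1) * ε) ?_
  intro x hx
  choose σ hσ hdist using fun n : Fin N => exists_abs_sub_le_of_abs_le (hpos n n.2) hε (hx n)
  refine Set.mem_iUnion.mpr ⟨fun n => ⟨σ n, hσ n⟩, ?_⟩
  rw [mem_closedBall, dist_eq_norm]
  refine lp.norm_le_of_forall_le hε.le fun n => ?_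
  rw [lp.coeFn_sub, Pi.sub_apply, zeroExtend_apply]
  split_ifs with h
  · exact hdist ⟨n, h⟩
  · simpa using (hx n).trans (htail n (not_lt.mp h))

theorem prod_le_coveringNumber_linftyBox {a : ℕ → ℝ} (ha : ∀ n, 0 ≤ a n) {ε : ℝ} (hε : 0 < ε)
    (N : ℕ) : ((∏ n ∈ range N, ⌈a n / ε⌉₊ : ℕ) : ℕ∞) ≤ coveringNumber ε (linftyBox a) := by
  rw [← Fintype.card_pi_fin_eq_prod_range]
  refine card_le_coveringNumber hε.le (fun σ => zeroExtend fun n => equispaced (a n) ⌈a n / ε⌉₊ (σ n))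
    (fun σ n => ?_) fun σ τ hne => ?_
  · rw [zeroExtend_apply]
    split_ifs
    · exact abs_equispaced_le (ha n) (σ _).2
    · simpa using ha n
  · obtain ⟨n, hn⟩ := Function.ne_iff.mp hne
    calc 2 * ε < |equispaced (a n) ⌈a n / ε⌉₊ (σ n) - equispaced (a n) ⌈a n / ε⌉₊ (τ n)| :=
          lt_abs_equispaced_sub hε (σ n).2 (τ n).2 (Fin.val_ne_of_ne hn)
      _ = ‖((zeroExtend fun n => equispaced (a n) ⌈a n / ε⌉₊ (σ n)) -
            zeroExtend fun n => equispaced (a n) ⌈a n / ε⌉₊ (τ n)) n‖ := by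
          simp [zeroExtend_apply]
      _ ≤ dist _ _ := by rw [dist_eq_norm]; exact lp.norm_apply_le_norm top_ne_zero _ _

theorem coveringNumber_linftyBox {a : ℕ → ℝ} (hpos : ∀ n, 0 < a n) {ε : ℝ} (hε : 0 < ε) {N : ℕ}
    (htail : ∀ n, N ≤ n → a n ≤ ε) :
    coveringNumber ε (linftyBox a) = ((∏ n ∈ range N, ⌈a n / ε⌉₊ : ℕ) : ℕ∞) :=
  (coveringNumber_linftyBox_le hε (fun n _ => hpos n) htail).antisymm
    (prod_le_coveringNumber_linftyBox (fun n => (hpos n).le) hε N)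

end Linfty

theorem Real.sum_range_logb_one_add_one_div (b : ℝ) (n : ℕ) :
    ∑ k ∈ range n, Real.logb b (1 + 1 / ((k : ℝ) + 1)) = Real.logb b (n + 1) := by
  induction n with
  | zero => simp
  | succ n ih =>
    rw [sum_range_succ, ih, ← Real.logb_mul (by positivity) (by positivity)]
    congr 1
    push_cast
    field_simp

theorem sum_sum_range_eq_tsum_mul_card {α : Type*} (s : Finset α) (m : α → ℕ) (w : ℕ → ℝ) :
    ∑ n ∈ s, ∑ k ∈ range (m n), w k = ∑' k, w k * #{n ∈ s | k < m n} := by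
  have hsup {n k} (hn : n ∈ s) (hk : k < m n) : k < s.sup m := hk.trans_le (le_sup hn)
  rw [sum_comm' (t' := range (s.sup m)) (s' := fun k => {n ∈ s | k < m n})
    fun n k => by simpa using fun hn hk => hsup hn hk]
  rw [tsum_eq_sum (s := range (s.sup m)) fun k hk => ?_]
  · simp [mul_comm]
  · rw [filter_eq_empty_iff.mpr fun n hn hk' => hk (mem_range.mpr (hsup hn hk')), card_empty]
    simp

theorem natCard_setOf_mul_lt {μ : ℕ → ℝ} {ε : ℝ} (hε : 0 < ε) {N : ℕ}
    (htail : ∀ n, N ≤ n → μ n ≤ ε) (k : ℕ) :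
    Nat.card {n | ((k : ℝ) + 1) * ε < μ n} = #{n ∈ range N | k < ⌈μ n / ε⌉₊ - 1} := by
  rw [← Set.ncard_coe_finset, ← Nat.card_coe_set_eq]
  congr! 2
  ext n
  have hk : ε ≤ ((k : ℝ) + 1) * ε := le_mul_of_one_le_left hε.le (by simp)
  have hlt : ((k : ℝ) + 1) * ε < μ n ↔ k < ⌈μ n / ε⌉₊ - 1 := by
    rw [← lt_div_iff₀ hε, Nat.lt_sub_iff_add_lt, Nat.lt_ceil]
    push_cast
    rfl
  simp only [Set.mem_ofPred_eq, coe_filter, mem_range, ← hlt]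
  exact ⟨fun h => ⟨not_le.mp fun hn => (htail n hn).not_gt (hk.trans_lt h), h⟩, And.right⟩

theorem stmt11 (μ : ℕ → ℝ) (hpos : ∀ n, 0 < μ n) (hlim : Tendsto μ atTop (nhds 0))
    (ε : ℝ) (hε : 0 < ε) :
    metricEntropy ε {x : lp (fun _ : ℕ => ℝ) ⊤ | ∀ n : ℕ, |(x : ℕ → ℝ) n| ≤ μ n}
      = ∑' k : ℕ, Real.logb 2 (1 + 1 / ((k : ℝ) + 1)) *
          (Nat.card {n : ℕ | ((k : ℝ) + 1) * ε < μ n} : ℝ) := by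
  obtain ⟨N, hN⟩ : ∃ N, ∀ n, N ≤ n → μ n ≤ ε :=
    eventually_atTop.mp ((hlim.eventually_lt_const hε).mono fun _ => le_of_lt)
  have hceil (n : ℕ) : 1 ≤ ⌈μ n / ε⌉₊ := Nat.one_le_ceil_iff.mpr (div_pos (hpos n) hε)
  change metricEntropy ε (linftyBox μ) = _
  rw [metricEntropy, coveringNumber_linftyBox hpos hε hN,
    ENat.toNat_natCast, Nat.cast_prod, Real.logb_prod _ _ fun n _ => by
      exact_mod_cast Nat.one_le_iff_ne_zero.mp (hceil n)]
  simp_rw [natCard_setOf_mul_lt hε hN, ← sum_sum_range_eq_tsum_mul_card,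
    Real.sum_range_logb_one_add_one_div, Nat.cast_sub (hceil _), Nat.cast_one, sub_add_cancel]
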